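/- Let p be a prime and let G be a finitely generated group that is residually p. Then I_p(G), the kernel of the natural homomorphism Aut(G) → Aut(G/γ_2^p G) induced by the action of automorphisms on G/γ_2^p G = H_1(G, 𝔽_p), is residually p. -/

import Mathlib

/-! Common definitions following the paper "Residual p properties of mapping class groups
and surface groups" by L. Paris. -/

/-- The commutator `[g,h] = g⁻¹h⁻¹gh`. -/
def commAB {G : Type*} [Group G] (g h : G) : G := g⁻¹ * h⁻¹ * g * h

/-- The commutator subgroup `[K,H]`, generated by all `[g,h]` with `g ∈ K`, `h ∈ H`. -/
def commSub {G : Type*} [Group G] (K H : Subgroup G) : Subgroup G :=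
  Subgroup.closure {x | ∃ g ∈ K, ∃ h ∈ H, x = commAB g h}

/-- The subgroup `[K,H]^p`, generated by all `[g,h]` (`g ∈ K`, `h ∈ H`) together with all
`h^p` (`h ∈ H`). -/
def pComm (p : ℕ) {G : Type*} [Group G] (K H : Subgroup G) : Subgroup G :=
  Subgroup.closure ({x | ∃ g ∈ K, ∃ h ∈ H, x = commAB g h} ∪ {x | ∃ h ∈ H, x = h ^ p})

/-- The lower `𝔽_p`-linear central filtration: `γ_1^p G = G` and
`γ_{n+1}^p G = [G, γ_n^p G]^p` (with the harmless convention `γ_0^p G = G`). -/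
def gammaP (p : ℕ) (G : Type*) [Group G] : ℕ → Subgroup G
  | 0 => ⊤
  | 1 => ⊤
  | n + 2 => pComm p ⊤ (gammaP p G (n + 1))

theorem pComm_top_normal (p : ℕ) {G : Type*} [Group G] {H : Subgroup G} (hH : H.Normal) :
    (pComm p ⊤ H).Normal := by
  constructor
  intro x hx g
  unfold pComm at hx ⊢
  induction hx using Subgroup.closure_induction with
  | mem y hy =>
    apply Subgroup.subset_closure
    rcases hy with ⟨a, -, h, hh, rfl⟩ | ⟨h, hh, rfl⟩
    · exact Or.inl ⟨g * a * g⁻¹, trivial, g * h * g⁻¹, hH.conj_mem h hh g,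
        by unfold commAB; group⟩
    · exact Or.inr ⟨g * h * g⁻¹, hH.conj_mem h hh g, (conj_pow).symm⟩
  | one => simpa using Subgroup.one_mem _
  | mul a b ha hb iha ihb =>
    have e : g * (a * b) * g⁻¹ = (g * a * g⁻¹) * (g * b * g⁻¹) := by group
    rw [e]; exact Subgroup.mul_mem _ iha ihb
  | inv a ha iha =>
    have e : g * a⁻¹ * g⁻¹ = (g * a * g⁻¹)⁻¹ := by group
    rw [e]; exact Subgroup.inv_mem _ iha

instance gammaP_normal (p : ℕ) (G : Type*) [Group G] : ∀ n, (gammaP p G n).Normal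
  | 0 => by unfold gammaP; infer_instance
  | 1 => by unfold gammaP; infer_instance
  | n + 2 => by unfold gammaP; exact pComm_top_normal p (gammaP_normal p G (n + 1))

/-- `G` is residually `p`: every nontrivial element survives in some finite `p`-group
quotient. -/
def IsResiduallyP (p : ℕ) (G : Type*) [Group G] : Prop :=
  ∀ g : G, g ≠ 1 → ∃ (P : Type) (_ : Group P) (_ : Finite P) (φ : G →* P),
    IsPGroup p P ∧ Function.Surjective φ ∧ φ g ≠ 1

/-- `G` is conjugacy `p`-separable. -/
def IsConjPSeparable (p : ℕ) (G : Type*) [Group G] : Prop :=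
  ∀ g h : G, IsConj g h ∨ ∃ (P : Type) (_ : Group P) (_ : Finite P) (φ : G →* P),
    IsPGroup p P ∧ Function.Surjective φ ∧ ¬ IsConj (φ g) (φ h)

/-- Property A: every automorphism of `G` preserving every conjugacy class is inner. -/
def PropertyA (G : Type*) [Group G] : Prop :=
  ∀ α : MulAut G, (∀ g : G, IsConj g (α g)) → α ∈ (MulAut.conj : G →* MulAut G).range

/-- `A_n`: the kernel of the natural homomorphism `Aut(G) → Aut(G/γ_{n+1}^p G)`, i.e. the
automorphisms acting trivially modulo `γ_{n+1}^p G`. -/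
def An (p : ℕ) (G : Type*) [Group G] (n : ℕ) : Subgroup (MulAut G) where
  carrier := {α | ∀ g : G, g⁻¹ * α g ∈ gammaP p G (n + 1)}
  one_mem' := by intro g; simpa using Subgroup.one_mem _
  mul_mem' := by
    intro a b ha hb g
    have e : g⁻¹ * (a * b) g = (g⁻¹ * b g) * ((b g)⁻¹ * a (b g)) := by
      rw [MulAut.mul_apply]; group
    rw [e]; exact Subgroup.mul_mem _ (hb g) (ha (b g))
  inv_mem' := by
    intro a ha g
    have h := ha ((a⁻¹ : MulAut G) g)
    rw [MulAut.apply_inv_self] at h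
    have e : g⁻¹ * (a⁻¹ : MulAut G) g = (((a⁻¹ : MulAut G) g)⁻¹ * g)⁻¹ := by group
    rw [e]; exact Subgroup.inv_mem _ h

theorem mem_An {p : ℕ} {G : Type*} [Group G] {n : ℕ} {α : MulAut G} :
    α ∈ An p G n ↔ ∀ g : G, g⁻¹ * α g ∈ gammaP p G (n + 1) := Iff.rfl

/-- `I_p(G)`: the kernel of the natural homomorphism `Aut(G) → Aut(G/γ_2^p G)`. -/
abbrev Ip (p : ℕ) (G : Type*) [Group G] : Subgroup (MulAut G) := An p G 1

/-- `Inn(G)`, viewed as a subgroup of `I_p(G)`. -/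
def InnSub (p : ℕ) (G : Type*) [Group G] : Subgroup (Ip p G) :=
  Subgroup.comap (Ip p G).subtype (MulAut.conj : G →* MulAut G).range

instance innSub_normal (p : ℕ) (G : Type*) [Group G] : (InnSub p G).Normal := by
  constructor
  rintro n hn g
  obtain ⟨x, hx⟩ := hn
  refine ⟨(g : MulAut G) x, ?_⟩
  have hx' : MulAut.conj x = (n : MulAut G) := hx
  show MulAut.conj ((g : MulAut G) x) = ((g * n * g⁻¹ : Ip p G) : MulAut G)
  ext y
  simp only [Subgroup.coe_mul, Subgroup.coe_inv, MulAut.mul_apply, MulAut.conj_apply, ← hx',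
    map_mul, map_inv, MulAut.apply_inv_self]

/-- The surface relator `[x_1,y_1][x_2,y_2]⋯[x_ρ,y_ρ]` in the free group on
`x_1, …, x_ρ, y_1, …, y_ρ`. -/
def surfaceRel (ρ : ℕ) : FreeGroup (Fin ρ ⊕ Fin ρ) :=
  (List.ofFn fun i : Fin ρ =>
    commAB (FreeGroup.of (Sum.inl i)) (FreeGroup.of (Sum.inr i))).prod

/-- The fundamental group of the closed oriented surface of genus `ρ`, given by the
presentation `⟨x_1, …, x_ρ, y_1, …, y_ρ | [x_1,y_1]⋯[x_ρ,y_ρ] = 1⟩`. -/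
abbrev SurfaceGroup (ρ : ℕ) : Type :=
  PresentedGroup ({surfaceRel ρ} : Set (FreeGroup (Fin ρ ⊕ Fin ρ)))

/-!
An automorphism `α ≠ 1` in `I_p(G)` moves some `g`. Since `G` is residually `p` and the
filtration `γ_n^p` of a finite `p`-group reaches `1`, the element `g⁻¹ α(g)` lies outside some
`γ_n^p G`. As `G` is finitely generated and the layers `γ_k^p / γ_{k+1}^p` are central of
exponent `p`, the quotient `G / γ_n^p G` is a finite `p`-group, on which `α` induces a nontrivial
element of `I_p(G / γ_n^p G)`. That group is a `p`-group: an automorphism acting trivially on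
`G / γ_2^p` acts trivially on every layer, so its `p`-th power acts trivially one step further
down the filtration.
-/

section Filtration

variable {p : ℕ} {G : Type*} [Group G]

theorem commAB_eq_one_of_commute {a b : G} (h : Commute a b) : commAB a b = 1 := by
  rw [commAB, mul_assoc, h.eq]
  group

theorem commAB_mul_left (a b h : G) : commAB (a * b) h = b⁻¹ * commAB a h * b * commAB b h := by
  simp only [commAB]
  group

theorem map_commAB {H F : Type*} [Group H] [FunLike F G H] [MonoidHomClass F G H] (f : F)
    (a b : G) : f (commAB a b) = commAB (f a) (f b) := by
  simp only [commAB, map_mul, map_inv]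

theorem pComm_le {K H N : Subgroup G} (hcomm : ∀ g ∈ K, ∀ h ∈ H, commAB g h ∈ N)
    (hpow : ∀ h ∈ H, h ^ p ∈ N) : pComm p K H ≤ N := by
  refine (Subgroup.closure_le N).2 ?_
  rintro x (⟨g, hg, h, hh, rfl⟩ | ⟨h, hh, rfl⟩)
  exacts [hcomm g hg h hh, hpow h hh]

theorem commAB_mem_gammaP_succ {n : ℕ} (g : G) {h : G} (hh : h ∈ gammaP p G n) :
    commAB g h ∈ gammaP p G (n + 1) := by
  match n with
  | 0 => exact Subgroup.mem_top _
  | n + 1 => exact Subgroup.subset_closure (Or.inl ⟨g, trivial, h, hh, rfl⟩)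

theorem pow_mem_gammaP_succ {n : ℕ} {h : G} (hh : h ∈ gammaP p G n) :
    h ^ p ∈ gammaP p G (n + 1) := by
  match n with
  | 0 => exact Subgroup.mem_top _
  | n + 1 => exact Subgroup.subset_closure (Or.inr ⟨h, hh, rfl⟩)

theorem commAB_mem_gammaP_succ' {n : ℕ} {h : G} (hh : h ∈ gammaP p G n) (g : G) :
    commAB h g ∈ gammaP p G (n + 1) := by
  have : commAB h g = (commAB g h)⁻¹ := by simp only [commAB]; group
  exact this ▸ inv_mem (commAB_mem_gammaP_succ g hh)

theorem gammaP_succ_le (n : ℕ) : gammaP p G (n + 1) ≤ gammaP p G n := by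
  match n with
  | 0 => exact le_top
  | n + 1 =>
    refine pComm_le (fun g _ h hh => ?_) (fun h hh => pow_mem hh p)
    have : commAB g h = (g⁻¹ * h⁻¹ * g⁻¹⁻¹) * h := by simp only [commAB]; group
    exact this ▸ mul_mem ((gammaP_normal p G _).conj_mem _ (inv_mem hh) g⁻¹) hh

theorem gammaP_antitone : Antitone (gammaP p G) :=
  antitone_nat_of_succ_le gammaP_succ_le

theorem gammaP_le_comap {H : Type*} [Group H] (f : G →* H) :
    ∀ n, gammaP p G n ≤ (gammaP p H n).comap f
  | 0 | 1 => le_top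
  | n + 2 => pComm_le
      (fun g _ h hh => by
        simpa only [Subgroup.mem_comap, map_commAB] using
          commAB_mem_gammaP_succ (f g) (gammaP_le_comap f (n + 1) hh))
      (fun h hh => by
        simpa only [Subgroup.mem_comap, map_pow] using
          pow_mem_gammaP_succ (gammaP_le_comap f (n + 1) hh))

instance gammaP_characteristic (n : ℕ) : (gammaP p G n).Characteristic :=
  Subgroup.characteristic_iff_le_comap.2 fun φ => gammaP_le_comap φ.toMonoidHom n

theorem mk_mem_center_of_mem_gammaP {n : ℕ} {x : G} (hx : x ∈ gammaP p G n) :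
    (x : G ⧸ gammaP p G (n + 1)) ∈ Subgroup.center (G ⧸ gammaP p G (n + 1)) := by
  refine Subgroup.mem_center_iff.2 fun q => ?_
  induction q using QuotientGroup.induction_on with
  | H g =>
    rw [← QuotientGroup.mk_mul, ← QuotientGroup.mk_mul, QuotientGroup.eq]
    have : (g * x)⁻¹ * (x * g) = commAB x g := by simp only [commAB]; group
    exact this ▸ commAB_mem_gammaP_succ' hx g

theorem mk_pow_eq_one_of_mem_gammaP {n : ℕ} {x : G} (hx : x ∈ gammaP p G n) :
    (x : G ⧸ gammaP p G (n + 1)) ^ p = 1 := by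
  rw [← QuotientGroup.mk_pow, QuotientGroup.eq_one_iff]
  exact pow_mem_gammaP_succ hx

theorem gammaP_two_le_ker {Q : Type*} [Group Q] (f : G →* Q)
    (hcomm : ∀ x y, Commute (f x) (f y)) (hpow : ∀ x, f x ^ p = 1) : gammaP p G 2 ≤ f.ker :=
  pComm_le
    (fun x _ y _ => by
      rw [MonoidHom.mem_ker, map_commAB, commAB_eq_one_of_commute (hcomm x y)])
    (fun x _ => by rw [MonoidHom.mem_ker, map_pow, hpow])

/-- For fixed `h ∈ γ_n`, the map `a ↦ [a, h]` is a homomorphism into the central exponent-`p`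
layer `γ_{n+1}/γ_{n+2}`, so it kills `γ_2`. -/
theorem commAB_mem_gammaP_add_two {n : ℕ} {a h : G} (ha : a ∈ gammaP p G 2)
    (hh : h ∈ gammaP p G n) : commAB a h ∈ gammaP p G (n + 2) := by
  have hcent (a : G) := mk_mem_center_of_mem_gammaP (commAB_mem_gammaP_succ a hh)
  let f : G →* G ⧸ gammaP p G (n + 2) := MonoidHom.mk' (fun a => (commAB a h : _)) fun a b => by
    rw [commAB_mul_left, QuotientGroup.mk_mul, QuotientGroup.mk_mul, QuotientGroup.mk_mul,
      QuotientGroup.mk_inv, Subgroup.mem_center_iff.1 (hcent a)]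
    group
  have hf : f a = 1 := gammaP_two_le_ker f
    (fun x y => Subgroup.mem_center_iff.1 (hcent y) (f x))
    (fun x => mk_pow_eq_one_of_mem_gammaP (commAB_mem_gammaP_succ x hh)) ha
  exact (QuotientGroup.eq_one_iff _).1 hf

end Filtration

section Automorphisms

variable {G : Type*} [Group G]

def MulAut.quotient (H : Subgroup G) [H.Normal] [H.Characteristic] :
    MulAut G →* MulAut (G ⧸ H) where
  toFun φ := QuotientGroup.congr H H φ (Subgroup.characteristic_iff_map_eq.1 ‹_› φ)
  map_one' := by
    ext x
    induction x using QuotientGroup.induction_on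
    rfl
  map_mul' _ _ := by
    ext x
    induction x using QuotientGroup.induction_on
    rfl

@[simp]
theorem MulAut.quotient_apply_mk (H : Subgroup G) [H.Normal] [H.Characteristic] (φ : MulAut G)
    (x : G) : MulAut.quotient H φ x = φ x :=
  rfl

theorem MulAut.quotient_eq_one_iff {H : Subgroup G} [H.Normal] [H.Characteristic]
    {φ : MulAut G} : MulAut.quotient H φ = 1 ↔ ∀ g, g⁻¹ * φ g ∈ H := by
  rw [MulEquiv.ext_iff, QuotientGroup.mk_surjective.forall]
  exact forall_congr' fun g => eq_comm.trans QuotientGroup.eq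

theorem MulAut.pow_apply_eq_mul_pow {β : MulAut G} {x c : G} (hx : β x = x * c) (hc : β c = c) :
    ∀ j : ℕ, (β ^ j) x = x * c ^ j
  | 0 => by simp
  | j + 1 => by
    rw [pow_succ', MulAut.mul_apply, MulAut.pow_apply_eq_mul_pow hx hc j, map_mul, map_pow, hx,
      hc, pow_succ', mul_assoc]

end Automorphisms

section IpAction

variable {p : ℕ} {G : Type*} [Group G]

theorem mem_An_iff_quotient_eq_one {n : ℕ} {α : MulAut G} :
    α ∈ An p G n ↔ MulAut.quotient (gammaP p G (n + 1)) α = 1 :=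
  MulAut.quotient_eq_one_iff.symm

theorem mk_apply_eq_of_mem_Ip {α : MulAut G} (hα : α ∈ Ip p G) :
    ∀ (n : ℕ) {x : G}, x ∈ gammaP p G (n + 1) → (α x : G ⧸ gammaP p G (n + 2)) = x
  | 0, x, _ => (QuotientGroup.eq.2 (hα x)).symm
  | n + 1, x, hx => by
    have ih {h : G} (hh : h ∈ gammaP p G (n + 1)) : h⁻¹ * α h ∈ gammaP p G (n + 2) :=
      QuotientGroup.eq.1 (mk_apply_eq_of_mem_Ip hα n hh).symm
    let π := QuotientGroup.mk' (gammaP p G (n + 3))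
    suffices gammaP p G (n + 2) ≤ π.eqLocus (π.comp α.toMonoidHom) from (this hx).symm
    refine pComm_le (fun g _ h hh => ?_) (fun h hh => ?_)
    · obtain ⟨a, ha, hga⟩ : ∃ a ∈ gammaP p G 2, α g = g * a := ⟨g⁻¹ * α g, hα g, by group⟩
      obtain ⟨b, hb, hhb⟩ : ∃ b ∈ gammaP p G (n + 2), α h = h * b := ⟨_, ih hh, by group⟩
      have key : (commAB g h)⁻¹ * α (commAB g h) = commAB (commAB g h) a * commAB a h *
          commAB (g * a * h) (h * b * h⁻¹) * commAB h⁻¹ b := by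
        rw [map_commAB, hga, hhb]
        simp only [commAB]
        group
      have hhbh : h * b * h⁻¹ ∈ gammaP p G (n + 2) := (gammaP_normal p G _).conj_mem b hb h
      refine QuotientGroup.eq.2 (key ▸ mul_mem (mul_mem (mul_mem ?_ ?_) ?_) ?_)
      · exact commAB_mem_gammaP_succ' (commAB_mem_gammaP_succ g hh) a
      · exact commAB_mem_gammaP_add_two ha hh
      · exact commAB_mem_gammaP_succ _ hhbh
      · exact commAB_mem_gammaP_succ _ hb
    · obtain ⟨b, hb, hhb⟩ : ∃ b ∈ gammaP p G (n + 2), α h = h * b := ⟨_, ih hh, by group⟩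
      have hcomm : Commute (π h) (π b) :=
        Subgroup.mem_center_iff.1 (mk_mem_center_of_mem_gammaP hb) (π h)
      change π (h ^ p) = π (α (h ^ p))
      rw [map_pow α, hhb, map_pow, map_pow, map_mul, hcomm.mul_pow, QuotientGroup.mk'_apply,
        QuotientGroup.mk'_apply, mk_pow_eq_one_of_mem_gammaP hb, mul_one]

theorem pow_mem_An_succ {α : MulAut G} (hα : α ∈ Ip p G) {n : ℕ} (hn : α ∈ An p G n) :
    α ^ p ∈ An p G (n + 1) := by
  rw [mem_An_iff_quotient_eq_one, map_pow]
  ext q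
  induction q using QuotientGroup.induction_on with
  | H x =>
    have hc : x⁻¹ * α x ∈ gammaP p G (n + 1) := hn x
    rw [MulAut.pow_apply_eq_mul_pow (c := ((x⁻¹ * α x : G) : G ⧸ gammaP p G (n + 2))) ?_ ?_ p,
      mk_pow_eq_one_of_mem_gammaP hc, mul_one, MulAut.one_apply]
    · rw [MulAut.quotient_apply_mk, ← QuotientGroup.mk_mul, mul_inv_cancel_left]
    · exact mk_apply_eq_of_mem_Ip hα n hc

end IpAction

section FinitePGroup

variable {p : ℕ} [Fact p.Prime]

theorem IsPGroup.exists_mem_center_orderOf_eq {Q : Type*} [Group Q] [Finite Q] [Nontrivial Q]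
    (hQ : IsPGroup p Q) : ∃ z ∈ Subgroup.center Q, orderOf z = p := by
  have := hQ.center_nontrivial
  have hdvd : p ∣ Nat.card (Subgroup.center Q) :=
    ((hQ.to_subgroup _).card_eq_or_dvd).resolve_left Finite.one_lt_card.ne'
  obtain ⟨z, hz⟩ := exists_prime_orderOf_dvd_card' p hdvd
  exact ⟨z, z.2, (Subgroup.orderOf_coe z).trans hz⟩

/-- Induction on `|Q|`: if `γ_n` vanishes modulo a central subgroup `Z` of order `p`, then
`γ_{n+2} = [Q, γ_{n+1}] (γ_{n+1})^p ≤ [Q, Z] Z^p = 1`. -/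
theorem IsPGroup.exists_gammaP_eq_bot {Q : Type*} [Group Q] [Finite Q] (hQ : IsPGroup p Q) :
    ∃ n, gammaP p Q n = ⊥ := by
  induction hcard : Nat.card Q using Nat.strong_induction_on generalizing Q with
  | _ k ih =>
  rcases subsingleton_or_nontrivial Q with hQ1 | hQ1
  · exact ⟨0, Subsingleton.elim _ _⟩
  obtain ⟨z, hzc, hz⟩ := hQ.exists_mem_center_orderOf_eq
  set Z := Subgroup.zpowers z
  have hZc : Z ≤ Subgroup.center Q := Subgroup.zpowers_le.2 hzc
  have : Z.Normal :=
    ⟨fun x hx g => by rwa [Subgroup.mem_center_iff.1 (hZc hx) g, mul_inv_cancel_right]⟩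
  have hlt : Nat.card (Q ⧸ Z) < k := by
    have hZ : Nat.card Z = p := (Nat.card_zpowers z).trans hz
    rw [← hcard, Subgroup.card_eq_card_quotient_mul_card_subgroup Z, hZ]
    exact lt_mul_of_one_lt_right Nat.card_pos (Fact.out : p.Prime).one_lt
  obtain ⟨n, hn⟩ := ih _ hlt (hQ.to_quotient Z) rfl
  have hle : gammaP p Q (n + 1) ≤ Z := fun x hx => by
    have := gammaP_le_comap (QuotientGroup.mk' Z) n (gammaP_succ_le n hx)
    rwa [hn, Subgroup.mem_comap, Subgroup.mem_bot, QuotientGroup.mk'_apply,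
      QuotientGroup.eq_one_iff] at this
  refine ⟨n + 2, eq_bot_iff.2 (pComm_le (fun g _ h hh => ?_) (fun h hh => ?_))⟩
  · exact commAB_eq_one_of_commute (Subgroup.mem_center_iff.1 (hZc (hle hh)) g)
  · obtain ⟨m, rfl⟩ := Subgroup.mem_zpowers_iff.1 (hle hh)
    rw [Subgroup.mem_bot, ← zpow_natCast, ← zpow_mul, mul_comm, zpow_mul, zpow_natCast,
      ← hz, pow_orderOf_eq_one, one_zpow]

/-- Burnside's argument: `α^(p^k) ∈ A_(k+1)`, which is trivial once `γ_(k+2) Q = 1`. -/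
theorem IsPGroup.isPGroup_Ip {Q : Type*} [Group Q] [Finite Q] (hQ : IsPGroup p Q) :
    IsPGroup p (Ip p Q) := by
  obtain ⟨m, hm⟩ := hQ.exists_gammaP_eq_bot
  intro α
  have hpow : ∀ k, (α : MulAut Q) ^ p ^ k ∈ An p Q (k + 1) := by
    intro k
    induction k with
    | zero => simpa only [pow_zero, pow_one] using α.2
    | succ k ih =>
      rw [pow_succ, pow_mul]
      exact pow_mem_An_succ (pow_mem α.2 _) ih
  refine ⟨m, Subtype.ext (MulEquiv.ext fun x => ?_)⟩
  have hx := gammaP_antitone (m.le_add_right 2) (hpow m x)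
  rw [hm, Subgroup.mem_bot, inv_mul_eq_one] at hx
  exact hx.symm

end FinitePGroup

section Quotients

variable {p : ℕ} {G : Type*} [Group G]

theorem finite_quotient_of_le_of_commAB_mem_of_pow_mem {M N : Subgroup G} [N.Normal]
    [Group.FG G] [Finite (G ⧸ M)] (hNM : N ≤ M) (hcomm : ∀ x ∈ M, ∀ y ∈ M, commAB x y ∈ N)
    (hp : p ≠ 0) (hpow : ∀ x ∈ M, x ^ p ∈ N) : Finite (G ⧸ N) := by
  have := Subgroup.finiteIndex_of_finite_quotient (H := M)
  let K := N.subgroupOf M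
  let : CommGroup (M ⧸ K) :=
    { mul_comm := fun a b => by
        induction a using QuotientGroup.induction_on with | H x =>
        induction b using QuotientGroup.induction_on with | H y =>
        rw [← QuotientGroup.mk_mul, ← QuotientGroup.mk_mul, QuotientGroup.eq,
          Subgroup.mem_subgroupOf, Subgroup.coe_mul, Subgroup.coe_inv, Subgroup.coe_mul,
          Subgroup.coe_mul]
        convert hcomm y y.2 x x.2 using 1
        simp only [commAB]
        group }
  have : Finite (M ⧸ K) := CommGroup.finite_of_fg_isMulTorsion _ fun a => by
    induction a using QuotientGroup.induction_on with | H x =>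
    refine isOfFinOrder_iff_pow_eq_one.2 ⟨p, Nat.pos_of_ne_zero hp, ?_⟩
    rw [← QuotientGroup.mk_pow, QuotientGroup.eq_one_iff, Subgroup.mem_subgroupOf,
      Subgroup.coe_pow]
    exact hpow x x.2
  have : N.FiniteIndex := ⟨by
    rw [← Subgroup.relIndex_mul_index hNM]
    exact mul_ne_zero Subgroup.index_ne_zero_of_finite Subgroup.index_ne_zero_of_finite⟩
  infer_instance

theorem finite_quotient_gammaP [Group.FG G] (hp : p ≠ 0) :
    ∀ n, Finite (G ⧸ gammaP p G n)
  | 0 => @Finite.of_subsingleton _ QuotientGroup.subsingleton_quotient_top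
  | n + 1 =>
    have := finite_quotient_gammaP hp n
    finite_quotient_of_le_of_commAB_mem_of_pow_mem (gammaP_succ_le n)
      (fun x _ _ hy => commAB_mem_gammaP_succ x hy) hp (fun _ hx => pow_mem_gammaP_succ hx)

theorem pow_pow_mem_gammaP (g : G) : ∀ n, g ^ p ^ n ∈ gammaP p G n
  | 0 => Subgroup.mem_top _
  | n + 1 => by
    rw [pow_succ, pow_mul]
    exact pow_mem_gammaP_succ (pow_pow_mem_gammaP g n)

theorem isPGroup_quotient_gammaP (n : ℕ) : IsPGroup p (G ⧸ gammaP p G n) := by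
  intro q
  induction q using QuotientGroup.induction_on with
  | H g => exact ⟨n, (QuotientGroup.eq_one_iff _).2 (pow_pow_mem_gammaP g n)⟩

theorem IsResiduallyP.exists_notMem_gammaP [Fact p.Prime] (hres : IsResiduallyP p G) {g : G}
    (hg : g ≠ 1) : ∃ n, g ∉ gammaP p G n := by
  obtain ⟨P, _, _, φ, hP, -, hφg⟩ := hres g hg
  obtain ⟨n, hn⟩ := hP.exists_gammaP_eq_bot
  refine ⟨n, fun hgn => hφg ?_⟩
  simpa only [hn, Subgroup.mem_comap, Subgroup.mem_bot] using gammaP_le_comap φ n hgn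

theorem quotient_mem_An {k : ℕ} {α : MulAut G} (hα : α ∈ An p G k) (n : ℕ) :
    MulAut.quotient (gammaP p G n) α ∈ An p (G ⧸ gammaP p G n) k := by
  intro q
  induction q using QuotientGroup.induction_on with
  | H x => exact gammaP_le_comap (QuotientGroup.mk' _) (k + 1) (hα x)

end Quotients

theorem exists_finite_pGroup_quotient_of_map_ne_one {p : ℕ} {X H : Type*} [Group X] [Group H]
    [Finite H] (hH : IsPGroup p H) (f : X →* H) {x : X} (hx : f x ≠ 1) :
    ∃ (P : Type) (_ : Group P) (_ : Finite P) (φ : X →* P),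
      IsPGroup p P ∧ Function.Surjective φ ∧ φ x ≠ 1 := by
  let e : Shrink.{0} f.range ≃* f.range := Shrink.mulEquiv
  have : Finite (Shrink.{0} f.range) := Finite.of_equiv _ e.symm.toEquiv
  refine ⟨_, _, this, e.symm.toMonoidHom.comp f.rangeRestrict,
    (hH.to_subgroup f.range).of_equiv e.symm,
    e.symm.surjective.comp f.rangeRestrict_surjective, fun h => hx ?_⟩
  simpa using congrArg (fun y => (e y : H)) h

/-- **Theorem 1.5 / 2.4.** If `G` is finitely generated and residually `p`, then `I_p(G)` is
residually `p`. -/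
theorem Ip_residuallyP (p : ℕ) (hp : p.Prime) (G : Type*) [Group G] (hfg : Group.FG G)
    (hres : IsResiduallyP p G) :
    IsResiduallyP p (Ip p G) := by
  have : Fact p.Prime := ⟨hp⟩
  have := hfg
  intro α hα
  obtain ⟨g, hg⟩ : ∃ g, g⁻¹ * (α : MulAut G) g ≠ 1 := by
    by_contra! h
    exact hα (Subtype.ext (MulEquiv.ext fun g => (inv_mul_eq_one.1 (h g)).symm))
  obtain ⟨n, hn⟩ := hres.exists_notMem_gammaP hg
  have : Finite (G ⧸ gammaP p G n) := finite_quotient_gammaP hp.ne_zero n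
  let Ψ : Ip p G →* Ip p (G ⧸ gammaP p G n) :=
    ((MulAut.quotient _).comp (Ip p G).subtype).codRestrict _ fun β => quotient_mem_An β.2 n
  exact exists_finite_pGroup_quotient_of_map_ne_one (isPGroup_quotient_gammaP n).isPGroup_Ip Ψ
    fun hΨ => hn (MulAut.quotient_eq_one_iff.1 (congrArg Subtype.val hΨ) g)
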